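/- (Milnor's isospectral non-isometric flat tori in dimension 16) There exist two lattices Λ₁ and Λ₂ in ℝ¹⁶ — discrete additive subgroups that are free ℤ-modules of rank 16 spanning ℝ¹⁶ — such that: (i) for every real number r ≥ 0, the (finite) number of vectors v ∈ Λ₁ with ‖v‖ = r equals the number of vectors v ∈ Λ₂ with ‖v‖ = r; and (ii) there is no orthogonal linear transformation T of ℝ¹⁶ with T(Λ₁) = Λ₂. Consequently the flat tori ℝ¹⁶/Λ₁ and ℝ¹⁶/Λ₂ have the same Laplace spectrum but are not isometric; one cannot hear the shape of a drum among closed manifolds. -/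

import Mathlib

noncomputable section MilnorConstruction

open Finset Submodule

abbrev E16 := EuclideanSpace ℝ (Fin 16)

/-- Cast an integer vector to `E16`. -/
def ι16 (z : Fin 16 → ℤ) : E16 := WithLp.toLp 2 (fun j => (z j : ℝ))

lemma ι16_apply (z : Fin 16 → ℤ) (j : Fin 16) : ι16 z j = (z j : ℝ) := rfl

/-- Basis matrix for the first lattice `L(C₁) ⊕ 2ℤ¹⁰`, where `C₁` is the binary `[6,3]` code
spanned by the weight-two words `{0,4}, {1,5}, {2,3}` (three disjoint pairs). -/
def B1 : Fin 16 → Fin 16 → ℤ := fun i j =>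
  if i = 0 then (if j = 0 ∨ j = 4 then 1 else 0)
  else if i = 1 then (if j = 1 ∨ j = 5 then 1 else 0)
  else if i = 2 then (if j = 2 ∨ j = 3 then 1 else 0)
  else if j = i then 2 else 0

/-- Basis matrix for the second lattice `L(C₂) ⊕ 2ℤ¹⁰`, where `C₂` is the binary `[6,3]` code
spanned by `{0,3}, {1,2,3,5}, {3,4}` (a "triangle" of weight-two words plus a glue word). -/
def B2 : Fin 16 → Fin 16 → ℤ := fun i j =>
  if i = 0 then (if j = 0 ∨ j = 3 then 1 else 0)
  else if i = 1 then (if j = 1 ∨ j = 2 ∨ j = 3 ∨ j = 5 then 1 else 0)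
  else if i = 3 then (if j = 3 ∨ j = 4 then 1 else 0)
  else if j = i then 2 else 0

def bas1 : Fin 16 → E16 := fun i => ι16 (B1 i)
def bas2 : Fin 16 → E16 := fun i => ι16 (B2 i)

/-- Membership predicate (on integer coordinate vectors) for the first lattice. -/
def mem1 (z : Fin 16 → ℤ) : Prop :=
  (z 3 - z 2) % 2 = 0 ∧ (z 4 - z 0) % 2 = 0 ∧ (z 5 - z 1) % 2 = 0 ∧
  ∀ j : Fin 16, 6 ≤ (j : ℕ) → z j % 2 = 0

/-- Membership predicate (on integer coordinate vectors) for the second lattice. -/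
def mem2 (z : Fin 16 → ℤ) : Prop :=
  (z 2 - z 1) % 2 = 0 ∧ (z 4 + z 0 + z 1 + z 3) % 2 = 0 ∧ (z 5 - z 1) % 2 = 0 ∧
  ∀ j : Fin 16, 6 ≤ (j : ℕ) → z j % 2 = 0

instance mem1_dec (z) : Decidable (mem1 z) := by unfold mem1; infer_instance
instance mem2_dec (z) : Decidable (mem2 z) := by unfold mem2; infer_instance

lemma sum16 {M : Type*} [AddCommMonoid M] (f : Fin 16 → M) :
    ∑ i, f i = f 0 + f 1 + f 2 + f 3 + f 4 + f 5 + f 6 + f 7 + f 8 + f 9 + f 10 + f 11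
      + f 12 + f 13 + f 14 + f 15 := by
  repeat rw [Fin.sum_univ_castSucc]
  rw [Finset.univ_eq_empty, Finset.sum_empty]
  norm_num
  rfl

/-- Evaluate a ℤ-linear combination of the rows of an integer matrix, viewed in `E16`. -/
lemma sum_smul_eval (B : Fin 16 → Fin 16 → ℤ) (n : Fin 16 → ℤ) (j : Fin 16) :
    (∑ i, n i • ι16 (B i)) j = ((∑ i, n i * B i j : ℤ) : ℝ) := by
  rw [sum16 (fun i => n i • ι16 (B i)), sum16 (fun i => n i * B i j)]
  simp only [PiLp.add_apply, PiLp.smul_apply, ι16_apply, zsmul_eq_mul]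
  push_cast
  ring

/-- characterization of the ℤ-span of `bas1`. -/
lemma mem_span1 (v : E16) :
    v ∈ Submodule.span ℤ (Set.range bas1) ↔ ∃ z, mem1 z ∧ v = ι16 z := by
  rw [mem_span_range_iff_exists_fun]
  constructor
  · rintro ⟨n, rfl⟩
    refine ⟨fun j => ∑ i, n i * B1 i j, ?_, ?_⟩
    · have h : ∀ j : Fin 16, (∑ i, n i * B1 i j) =
          n 0 * B1 0 j + n 1 * B1 1 j + n 2 * B1 2 j + n 3 * B1 3 j + n 4 * B1 4 j
          + n 5 * B1 5 j + n 6 * B1 6 j + n 7 * B1 7 j + n 8 * B1 8 j + n 9 * B1 9 j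
          + n 10 * B1 10 j + n 11 * B1 11 j + n 12 * B1 12 j + n 13 * B1 13 j
          + n 14 * B1 14 j + n 15 * B1 15 j := fun j => sum16 _
      refine ⟨?_, ?_, ?_, ?_⟩
      · show ((∑ i, n i * B1 i 3) - (∑ i, n i * B1 i 2)) % 2 = 0
        rw [h 3, h 2]; simp (config := { decide := true }) [B1]; try omega
      · show ((∑ i, n i * B1 i 4) - (∑ i, n i * B1 i 0)) % 2 = 0
        rw [h 4, h 0]; simp (config := { decide := true }) [B1]; try omega
      · show ((∑ i, n i * B1 i 5) - (∑ i, n i * B1 i 1)) % 2 = 0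
        rw [h 5, h 1]; simp (config := { decide := true }) [B1]; try omega
      · intro j hj
        show (∑ i, n i * B1 i j) % 2 = 0
        rw [h j]
        fin_cases j <;>
          first
            | exact absurd hj (by decide)
            | (simp (config := { decide := true }) [B1]; try omega)
    · ext j
      rw [ι16_apply]
      exact sum_smul_eval B1 n j
  · rintro ⟨z, ⟨h3, h4, h5, hp⟩, rfl⟩
    refine ⟨fun i => if i = 0 then z 0 else if i = 1 then z 1 else if i = 2 then z 2
      else if i = 3 then (z 3 - z 2) / 2 else if i = 4 then (z 4 - z 0) / 2
      else if i = 5 then (z 5 - z 1) / 2 else z i / 2, ?_⟩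
    ext j
    simp only [bas1]
    rw [sum_smul_eval B1 _ j, ι16_apply]
    congr 1
    rw [sum16 (fun i => _ * B1 i j)]
    have p6 := hp 6 (by decide)
    have p7 := hp 7 (by decide)
    have p8 := hp 8 (by decide)
    have p9 := hp 9 (by decide)
    have p10 := hp 10 (by decide)
    have p11 := hp 11 (by decide)
    have p12 := hp 12 (by decide)
    have p13 := hp 13 (by decide)
    have p14 := hp 14 (by decide)
    have p15 := hp 15 (by decide)
    fin_cases j <;>
      simp (config := { decide := true }) [B1] <;>
      omega

lemma mem_span2 (v : E16) :
    v ∈ Submodule.span ℤ (Set.range bas2) ↔ ∃ z, mem2 z ∧ v = ι16 z := by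
  rw [mem_span_range_iff_exists_fun]
  constructor
  · rintro ⟨n, rfl⟩
    refine ⟨fun j => ∑ i, n i * B2 i j, ?_, ?_⟩
    · have h : ∀ j : Fin 16, (∑ i, n i * B2 i j) =
          n 0 * B2 0 j + n 1 * B2 1 j + n 2 * B2 2 j + n 3 * B2 3 j + n 4 * B2 4 j
          + n 5 * B2 5 j + n 6 * B2 6 j + n 7 * B2 7 j + n 8 * B2 8 j + n 9 * B2 9 j
          + n 10 * B2 10 j + n 11 * B2 11 j + n 12 * B2 12 j + n 13 * B2 13 j
          + n 14 * B2 14 j + n 15 * B2 15 j := fun j => sum16 _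
      refine ⟨?_, ?_, ?_, ?_⟩
      · show ((∑ i, n i * B2 i 2) - (∑ i, n i * B2 i 1)) % 2 = 0
        rw [h 2, h 1]; simp (config := { decide := true }) [B2]; try omega
      · show ((∑ i, n i * B2 i 4) + (∑ i, n i * B2 i 0) + (∑ i, n i * B2 i 1)
            + (∑ i, n i * B2 i 3)) % 2 = 0
        rw [h 4, h 0, h 1, h 3]; simp (config := { decide := true }) [B2]; try omega
      · show ((∑ i, n i * B2 i 5) - (∑ i, n i * B2 i 1)) % 2 = 0
        rw [h 5, h 1]; simp (config := { decide := true }) [B2]; try omega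
      · intro j hj
        show (∑ i, n i * B2 i j) % 2 = 0
        rw [h j]
        fin_cases j <;>
          first
            | exact absurd hj (by decide)
            | (simp (config := { decide := true }) [B2]; try omega)
    · ext j
      rw [ι16_apply]
      exact sum_smul_eval B2 n j
  · rintro ⟨z, ⟨h2, h4, h5, hp⟩, rfl⟩
    refine ⟨fun i => if i = 0 then z 0 else if i = 1 then z 1
      else if i = 2 then (z 2 - z 1) / 2 else if i = 3 then z 3 - z 0 - z 1
      else if i = 4 then (z 4 - z 3 + z 0 + z 1) / 2 else if i = 5 then (z 5 - z 1) / 2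
      else z i / 2, ?_⟩
    ext j
    simp only [bas2]
    rw [sum_smul_eval B2 _ j, ι16_apply]
    congr 1
    rw [sum16 (fun i => _ * B2 i j)]
    have p6 := hp 6 (by decide)
    have p7 := hp 7 (by decide)
    have p8 := hp 8 (by decide)
    have p9 := hp 9 (by decide)
    have p10 := hp 10 (by decide)
    have p11 := hp 11 (by decide)
    have p12 := hp 12 (by decide)
    have p13 := hp 13 (by decide)
    have p14 := hp 14 (by decide)
    have p15 := hp 15 (by decide)
    fin_cases j <;>
      simp (config := { decide := true }) [B2] <;>
      omega

def pF : Equiv.Perm (Fin 16) := 1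
def pA : Equiv.Perm (Fin 16) := Equiv.swap 3 4
def pB : Equiv.Perm (Fin 16) := Equiv.swap 1 3 * Equiv.swap 4 5
def pC : Equiv.Perm (Fin 16) := Equiv.swap 0 2 * Equiv.swap 3 4
def pD : Equiv.Perm (Fin 16) := Equiv.swap 2 4
def pE : Equiv.Perm (Fin 16) := Equiv.swap 0 1 * Equiv.swap 3 5

lemma pF_fix : ∀ j : Fin 16, 6 ≤ (j : ℕ) → pF j = j := by decide
lemma pA_fix : ∀ j : Fin 16, 6 ≤ (j : ℕ) → pA j = j := by decide
lemma pB_fix : ∀ j : Fin 16, 6 ≤ (j : ℕ) → pB j = j := by decide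
lemma pC_fix : ∀ j : Fin 16, 6 ≤ (j : ℕ) → pC j = j := by decide
lemma pD_fix : ∀ j : Fin 16, 6 ≤ (j : ℕ) → pD j = j := by decide
lemma pE_fix : ∀ j : Fin 16, 6 ≤ (j : ℕ) → pE j = j := by decide

lemma pF_invol : ∀ j : Fin 16, pF (pF j) = j := by decide
lemma pA_invol : ∀ j : Fin 16, pA (pA j) = j := by decide
lemma pB_invol : ∀ j : Fin 16, pB (pB j) = j := by decide
lemma pC_invol : ∀ j : Fin 16, pC (pC j) = j := by decide
lemma pD_invol : ∀ j : Fin 16, pD (pD j) = j := by decide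
lemma pE_invol : ∀ j : Fin 16, pE (pE j) = j := by decide

/-- "is an odd integer" predicate on the reals. -/
def OddR (x : ℝ) : Prop := ∃ k : ℤ, x = 2 * k + 1

lemma oddR_intCast (n : ℤ) : OddR ((n : ℝ)) ↔ n % 2 = 1 := by
  constructor
  · rintro ⟨k, hk⟩
    have : n = 2 * k + 1 := by exact_mod_cast hk
    omega
  · intro h
    refine ⟨(n - 1) / 2, ?_⟩
    exact_mod_cast (by omega : n = 2 * ((n - 1) / 2) + 1)

open Classical in
/-- The piecewise permutation used for the transplantation `Λ₁ → Λ₂`. -/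
def sig1 (v : E16) : Equiv.Perm (Fin 16) :=
  if OddR (v 0) then
    if OddR (v 1) then (if OddR (v 2) then pF else pD)
    else (if OddR (v 2) then pE else pA)
  else
    if OddR (v 1) then (if OddR (v 2) then pF else pB)
    else (if OddR (v 2) then pC else pF)

open Classical in
/-- The piecewise permutation used for the transplantation `Λ₂ → Λ₁`. -/
def sig2 (v : E16) : Equiv.Perm (Fin 16) :=
  if OddR (v 0) then
    if OddR (v 1) then (if OddR (v 3) then pF else pD)
    else (if OddR (v 3) then pA else pC)
  else
    if OddR (v 1) then (if OddR (v 3) then pF else pE)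
    else (if OddR (v 3) then pB else pF)

/-- The norm-preserving transplantation map. -/
def Φ (v : E16) : E16 := WithLp.toLp 2 (fun j => v (sig1 v j))
/-- Its inverse. -/
def Ψ (v : E16) : E16 := WithLp.toLp 2 (fun j => v (sig2 v j))

lemma sig1_eq (z : Fin 16 → ℤ) :
    sig1 (ι16 z) =
      if z 0 % 2 = 1 then
        if z 1 % 2 = 1 then (if z 2 % 2 = 1 then pF else pD)
        else (if z 2 % 2 = 1 then pE else pA)
      else
        if z 1 % 2 = 1 then (if z 2 % 2 = 1 then pF else pB)
        else (if z 2 % 2 = 1 then pC else pF) := by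
  simp only [sig1, ι16_apply, oddR_intCast]

lemma sig2_eq (z : Fin 16 → ℤ) :
    sig2 (ι16 z) =
      if z 0 % 2 = 1 then
        if z 1 % 2 = 1 then (if z 3 % 2 = 1 then pF else pD)
        else (if z 3 % 2 = 1 then pA else pC)
      else
        if z 1 % 2 = 1 then (if z 3 % 2 = 1 then pF else pE)
        else (if z 3 % 2 = 1 then pB else pF) := by
  simp only [sig2, ι16_apply, oddR_intCast]

lemma key1 (z : Fin 16 → ℤ) (hz : mem1 z) :
    ∃ p : Equiv.Perm (Fin 16), Φ (ι16 z) = ι16 (fun j => z (p j)) ∧ mem2 (fun j => z (p j)) ∧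
      Ψ (ι16 (fun j => z (p j))) = ι16 z := by
  obtain ⟨h3, h4, h5, hp⟩ := hz
  rcases Int.emod_two_eq (z 0) with h0 | h0 <;>
    rcases Int.emod_two_eq (z 1) with h1 | h1 <;>
      rcases Int.emod_two_eq (z 2) with h2 | h2
  · -- parities (0, 0, 0), perm pF
    have hs : sig1 (ι16 z) = pF := by
      rw [sig1_eq]; simp [h0, h1, h2]
    have hs2 : sig2 (ι16 (fun j => z (pF j))) = pF := by
      rw [sig2_eq]
      simp only [show (pF : Equiv.Perm (Fin 16)) 0 = 0 from by decide,
        show (pF : Equiv.Perm (Fin 16)) 1 = 1 from by decide,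
        show (pF : Equiv.Perm (Fin 16)) 3 = 3 from by decide]
      simp [(show z 0 % 2 = 0 by omega), (show z 1 % 2 = 0 by omega), (show z 3 % 2 = 0 by omega)]
    refine ⟨pF, ?_, ⟨?_, ?_, ?_, ?_⟩, ?_⟩
    · ext j
      show (ι16 z) (sig1 (ι16 z) j) = _
      rw [hs]; rfl
    · show (z (pF 2) - z (pF 1)) % 2 = 0
      rw [show (pF : Equiv.Perm (Fin 16)) 2 = 2 from by decide, show (pF : Equiv.Perm (Fin 16)) 1 = 1 from by decide]; omega
    · show (z (pF 4) + z (pF 0) + z (pF 1) + z (pF 3)) % 2 = 0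
      rw [show (pF : Equiv.Perm (Fin 16)) 4 = 4 from by decide, show (pF : Equiv.Perm (Fin 16)) 0 = 0 from by decide, show (pF : Equiv.Perm (Fin 16)) 1 = 1 from by decide, show (pF : Equiv.Perm (Fin 16)) 3 = 3 from by decide]; omega
    · show (z (pF 5) - z (pF 1)) % 2 = 0
      rw [show (pF : Equiv.Perm (Fin 16)) 5 = 5 from by decide, show (pF : Equiv.Perm (Fin 16)) 1 = 1 from by decide]; omega
    · intro j hj
      show z (pF j) % 2 = 0
      rw [pF_fix j hj]
      exact hp j hj
    · ext j
      show (ι16 (fun j => z (pF j))) (sig2 (ι16 (fun j => z (pF j))) j) = _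
      rw [hs2]
      show ((z (pF (pF j)) : ℝ)) = ((z j : ℝ))
      rw [pF_invol j]
  · -- parities (0, 0, 1), perm pC
    have hs : sig1 (ι16 z) = pC := by
      rw [sig1_eq]; simp [h0, h1, h2]
    have hs2 : sig2 (ι16 (fun j => z (pC j))) = pC := by
      rw [sig2_eq]
      simp only [show (pC : Equiv.Perm (Fin 16)) 0 = 2 from by decide,
        show (pC : Equiv.Perm (Fin 16)) 1 = 1 from by decide,
        show (pC : Equiv.Perm (Fin 16)) 3 = 4 from by decide]
      simp [(show z 2 % 2 = 1 by omega), (show z 1 % 2 = 0 by omega), (show z 4 % 2 = 0 by omega)]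
    refine ⟨pC, ?_, ⟨?_, ?_, ?_, ?_⟩, ?_⟩
    · ext j
      show (ι16 z) (sig1 (ι16 z) j) = _
      rw [hs]; rfl
    · show (z (pC 2) - z (pC 1)) % 2 = 0
      rw [show (pC : Equiv.Perm (Fin 16)) 2 = 0 from by decide, show (pC : Equiv.Perm (Fin 16)) 1 = 1 from by decide]; omega
    · show (z (pC 4) + z (pC 0) + z (pC 1) + z (pC 3)) % 2 = 0
      rw [show (pC : Equiv.Perm (Fin 16)) 4 = 3 from by decide, show (pC : Equiv.Perm (Fin 16)) 0 = 2 from by decide, show (pC : Equiv.Perm (Fin 16)) 1 = 1 from by decide, show (pC : Equiv.Perm (Fin 16)) 3 = 4 from by decide]; omega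
    · show (z (pC 5) - z (pC 1)) % 2 = 0
      rw [show (pC : Equiv.Perm (Fin 16)) 5 = 5 from by decide, show (pC : Equiv.Perm (Fin 16)) 1 = 1 from by decide]; omega
    · intro j hj
      show z (pC j) % 2 = 0
      rw [pC_fix j hj]
      exact hp j hj
    · ext j
      show (ι16 (fun j => z (pC j))) (sig2 (ι16 (fun j => z (pC j))) j) = _
      rw [hs2]
      show ((z (pC (pC j)) : ℝ)) = ((z j : ℝ))
      rw [pC_invol j]
  · -- parities (0, 1, 0), perm pB
    have hs : sig1 (ι16 z) = pB := by
      rw [sig1_eq]; simp [h0, h1, h2]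
    have hs2 : sig2 (ι16 (fun j => z (pB j))) = pB := by
      rw [sig2_eq]
      simp only [show (pB : Equiv.Perm (Fin 16)) 0 = 0 from by decide,
        show (pB : Equiv.Perm (Fin 16)) 1 = 3 from by decide,
        show (pB : Equiv.Perm (Fin 16)) 3 = 1 from by decide]
      simp [(show z 0 % 2 = 0 by omega), (show z 3 % 2 = 0 by omega), (show z 1 % 2 = 1 by omega)]
    refine ⟨pB, ?_, ⟨?_, ?_, ?_, ?_⟩, ?_⟩
    · ext j
      show (ι16 z) (sig1 (ι16 z) j) = _
      rw [hs]; rfl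
    · show (z (pB 2) - z (pB 1)) % 2 = 0
      rw [show (pB : Equiv.Perm (Fin 16)) 2 = 2 from by decide, show (pB : Equiv.Perm (Fin 16)) 1 = 3 from by decide]; omega
    · show (z (pB 4) + z (pB 0) + z (pB 1) + z (pB 3)) % 2 = 0
      rw [show (pB : Equiv.Perm (Fin 16)) 4 = 5 from by decide, show (pB : Equiv.Perm (Fin 16)) 0 = 0 from by decide, show (pB : Equiv.Perm (Fin 16)) 1 = 3 from by decide, show (pB : Equiv.Perm (Fin 16)) 3 = 1 from by decide]; omega
    · show (z (pB 5) - z (pB 1)) % 2 = 0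
      rw [show (pB : Equiv.Perm (Fin 16)) 5 = 4 from by decide, show (pB : Equiv.Perm (Fin 16)) 1 = 3 from by decide]; omega
    · intro j hj
      show z (pB j) % 2 = 0
      rw [pB_fix j hj]
      exact hp j hj
    · ext j
      show (ι16 (fun j => z (pB j))) (sig2 (ι16 (fun j => z (pB j))) j) = _
      rw [hs2]
      show ((z (pB (pB j)) : ℝ)) = ((z j : ℝ))
      rw [pB_invol j]
  · -- parities (0, 1, 1), perm pF
    have hs : sig1 (ι16 z) = pF := by
      rw [sig1_eq]; simp [h0, h1, h2]
    have hs2 : sig2 (ι16 (fun j => z (pF j))) = pF := by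
      rw [sig2_eq]
      simp only [show (pF : Equiv.Perm (Fin 16)) 0 = 0 from by decide,
        show (pF : Equiv.Perm (Fin 16)) 1 = 1 from by decide,
        show (pF : Equiv.Perm (Fin 16)) 3 = 3 from by decide]
      simp [(show z 0 % 2 = 0 by omega), (show z 1 % 2 = 1 by omega), (show z 3 % 2 = 1 by omega)]
    refine ⟨pF, ?_, ⟨?_, ?_, ?_, ?_⟩, ?_⟩
    · ext j
      show (ι16 z) (sig1 (ι16 z) j) = _
      rw [hs]; rfl
    · show (z (pF 2) - z (pF 1)) % 2 = 0
      rw [show (pF : Equiv.Perm (Fin 16)) 2 = 2 from by decide, show (pF : Equiv.Perm (Fin 16)) 1 = 1 from by decide]; omega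
    · show (z (pF 4) + z (pF 0) + z (pF 1) + z (pF 3)) % 2 = 0
      rw [show (pF : Equiv.Perm (Fin 16)) 4 = 4 from by decide, show (pF : Equiv.Perm (Fin 16)) 0 = 0 from by decide, show (pF : Equiv.Perm (Fin 16)) 1 = 1 from by decide, show (pF : Equiv.Perm (Fin 16)) 3 = 3 from by decide]; omega
    · show (z (pF 5) - z (pF 1)) % 2 = 0
      rw [show (pF : Equiv.Perm (Fin 16)) 5 = 5 from by decide, show (pF : Equiv.Perm (Fin 16)) 1 = 1 from by decide]; omega
    · intro j hj
      show z (pF j) % 2 = 0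
      rw [pF_fix j hj]
      exact hp j hj
    · ext j
      show (ι16 (fun j => z (pF j))) (sig2 (ι16 (fun j => z (pF j))) j) = _
      rw [hs2]
      show ((z (pF (pF j)) : ℝ)) = ((z j : ℝ))
      rw [pF_invol j]
  · -- parities (1, 0, 0), perm pA
    have hs : sig1 (ι16 z) = pA := by
      rw [sig1_eq]; simp [h0, h1, h2]
    have hs2 : sig2 (ι16 (fun j => z (pA j))) = pA := by
      rw [sig2_eq]
      simp only [show (pA : Equiv.Perm (Fin 16)) 0 = 0 from by decide,
        show (pA : Equiv.Perm (Fin 16)) 1 = 1 from by decide,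
        show (pA : Equiv.Perm (Fin 16)) 3 = 4 from by decide]
      simp [(show z 0 % 2 = 1 by omega), (show z 1 % 2 = 0 by omega), (show z 4 % 2 = 1 by omega)]
    refine ⟨pA, ?_, ⟨?_, ?_, ?_, ?_⟩, ?_⟩
    · ext j
      show (ι16 z) (sig1 (ι16 z) j) = _
      rw [hs]; rfl
    · show (z (pA 2) - z (pA 1)) % 2 = 0
      rw [show (pA : Equiv.Perm (Fin 16)) 2 = 2 from by decide, show (pA : Equiv.Perm (Fin 16)) 1 = 1 from by decide]; omega
    · show (z (pA 4) + z (pA 0) + z (pA 1) + z (pA 3)) % 2 = 0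
      rw [show (pA : Equiv.Perm (Fin 16)) 4 = 3 from by decide, show (pA : Equiv.Perm (Fin 16)) 0 = 0 from by decide, show (pA : Equiv.Perm (Fin 16)) 1 = 1 from by decide, show (pA : Equiv.Perm (Fin 16)) 3 = 4 from by decide]; omega
    · show (z (pA 5) - z (pA 1)) % 2 = 0
      rw [show (pA : Equiv.Perm (Fin 16)) 5 = 5 from by decide, show (pA : Equiv.Perm (Fin 16)) 1 = 1 from by decide]; omega
    · intro j hj
      show z (pA j) % 2 = 0
      rw [pA_fix j hj]
      exact hp j hj
    · ext j
      show (ι16 (fun j => z (pA j))) (sig2 (ι16 (fun j => z (pA j))) j) = _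
      rw [hs2]
      show ((z (pA (pA j)) : ℝ)) = ((z j : ℝ))
      rw [pA_invol j]
  · -- parities (1, 0, 1), perm pE
    have hs : sig1 (ι16 z) = pE := by
      rw [sig1_eq]; simp [h0, h1, h2]
    have hs2 : sig2 (ι16 (fun j => z (pE j))) = pE := by
      rw [sig2_eq]
      simp only [show (pE : Equiv.Perm (Fin 16)) 0 = 1 from by decide,
        show (pE : Equiv.Perm (Fin 16)) 1 = 0 from by decide,
        show (pE : Equiv.Perm (Fin 16)) 3 = 5 from by decide]
      simp [(show z 1 % 2 = 0 by omega), (show z 0 % 2 = 1 by omega), (show z 5 % 2 = 0 by omega)]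
    refine ⟨pE, ?_, ⟨?_, ?_, ?_, ?_⟩, ?_⟩
    · ext j
      show (ι16 z) (sig1 (ι16 z) j) = _
      rw [hs]; rfl
    · show (z (pE 2) - z (pE 1)) % 2 = 0
      rw [show (pE : Equiv.Perm (Fin 16)) 2 = 2 from by decide, show (pE : Equiv.Perm (Fin 16)) 1 = 0 from by decide]; omega
    · show (z (pE 4) + z (pE 0) + z (pE 1) + z (pE 3)) % 2 = 0
      rw [show (pE : Equiv.Perm (Fin 16)) 4 = 4 from by decide, show (pE : Equiv.Perm (Fin 16)) 0 = 1 from by decide, show (pE : Equiv.Perm (Fin 16)) 1 = 0 from by decide, show (pE : Equiv.Perm (Fin 16)) 3 = 5 from by decide]; omega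
    · show (z (pE 5) - z (pE 1)) % 2 = 0
      rw [show (pE : Equiv.Perm (Fin 16)) 5 = 3 from by decide, show (pE : Equiv.Perm (Fin 16)) 1 = 0 from by decide]; omega
    · intro j hj
      show z (pE j) % 2 = 0
      rw [pE_fix j hj]
      exact hp j hj
    · ext j
      show (ι16 (fun j => z (pE j))) (sig2 (ι16 (fun j => z (pE j))) j) = _
      rw [hs2]
      show ((z (pE (pE j)) : ℝ)) = ((z j : ℝ))
      rw [pE_invol j]
  · -- parities (1, 1, 0), perm pD
    have hs : sig1 (ι16 z) = pD := by
      rw [sig1_eq]; simp [h0, h1, h2]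
    have hs2 : sig2 (ι16 (fun j => z (pD j))) = pD := by
      rw [sig2_eq]
      simp only [show (pD : Equiv.Perm (Fin 16)) 0 = 0 from by decide,
        show (pD : Equiv.Perm (Fin 16)) 1 = 1 from by decide,
        show (pD : Equiv.Perm (Fin 16)) 3 = 3 from by decide]
      simp [(show z 0 % 2 = 1 by omega), (show z 1 % 2 = 1 by omega), (show z 3 % 2 = 0 by omega)]
    refine ⟨pD, ?_, ⟨?_, ?_, ?_, ?_⟩, ?_⟩
    · ext j
      show (ι16 z) (sig1 (ι16 z) j) = _
      rw [hs]; rfl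
    · show (z (pD 2) - z (pD 1)) % 2 = 0
      rw [show (pD : Equiv.Perm (Fin 16)) 2 = 4 from by decide, show (pD : Equiv.Perm (Fin 16)) 1 = 1 from by decide]; omega
    · show (z (pD 4) + z (pD 0) + z (pD 1) + z (pD 3)) % 2 = 0
      rw [show (pD : Equiv.Perm (Fin 16)) 4 = 2 from by decide, show (pD : Equiv.Perm (Fin 16)) 0 = 0 from by decide, show (pD : Equiv.Perm (Fin 16)) 1 = 1 from by decide, show (pD : Equiv.Perm (Fin 16)) 3 = 3 from by decide]; omega
    · show (z (pD 5) - z (pD 1)) % 2 = 0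
      rw [show (pD : Equiv.Perm (Fin 16)) 5 = 5 from by decide, show (pD : Equiv.Perm (Fin 16)) 1 = 1 from by decide]; omega
    · intro j hj
      show z (pD j) % 2 = 0
      rw [pD_fix j hj]
      exact hp j hj
    · ext j
      show (ι16 (fun j => z (pD j))) (sig2 (ι16 (fun j => z (pD j))) j) = _
      rw [hs2]
      show ((z (pD (pD j)) : ℝ)) = ((z j : ℝ))
      rw [pD_invol j]
  · -- parities (1, 1, 1), perm pF
    have hs : sig1 (ι16 z) = pF := by
      rw [sig1_eq]; simp [h0, h1, h2]
    have hs2 : sig2 (ι16 (fun j => z (pF j))) = pF := by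
      rw [sig2_eq]
      simp only [show (pF : Equiv.Perm (Fin 16)) 0 = 0 from by decide,
        show (pF : Equiv.Perm (Fin 16)) 1 = 1 from by decide,
        show (pF : Equiv.Perm (Fin 16)) 3 = 3 from by decide]
      simp [(show z 0 % 2 = 1 by omega), (show z 1 % 2 = 1 by omega), (show z 3 % 2 = 1 by omega)]
    refine ⟨pF, ?_, ⟨?_, ?_, ?_, ?_⟩, ?_⟩
    · ext j
      show (ι16 z) (sig1 (ι16 z) j) = _
      rw [hs]; rfl
    · show (z (pF 2) - z (pF 1)) % 2 = 0
      rw [show (pF : Equiv.Perm (Fin 16)) 2 = 2 from by decide, show (pF : Equiv.Perm (Fin 16)) 1 = 1 from by decide]; omega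
    · show (z (pF 4) + z (pF 0) + z (pF 1) + z (pF 3)) % 2 = 0
      rw [show (pF : Equiv.Perm (Fin 16)) 4 = 4 from by decide, show (pF : Equiv.Perm (Fin 16)) 0 = 0 from by decide, show (pF : Equiv.Perm (Fin 16)) 1 = 1 from by decide, show (pF : Equiv.Perm (Fin 16)) 3 = 3 from by decide]; omega
    · show (z (pF 5) - z (pF 1)) % 2 = 0
      rw [show (pF : Equiv.Perm (Fin 16)) 5 = 5 from by decide, show (pF : Equiv.Perm (Fin 16)) 1 = 1 from by decide]; omega
    · intro j hj
      show z (pF j) % 2 = 0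
      rw [pF_fix j hj]
      exact hp j hj
    · ext j
      show (ι16 (fun j => z (pF j))) (sig2 (ι16 (fun j => z (pF j))) j) = _
      rw [hs2]
      show ((z (pF (pF j)) : ℝ)) = ((z j : ℝ))
      rw [pF_invol j]

lemma key2 (z : Fin 16 → ℤ) (hz : mem2 z) :
    ∃ p : Equiv.Perm (Fin 16), Ψ (ι16 z) = ι16 (fun j => z (p j)) ∧ mem1 (fun j => z (p j)) ∧
      Φ (ι16 (fun j => z (p j))) = ι16 z := by
  obtain ⟨h2, h4, h5, hp⟩ := hz
  rcases Int.emod_two_eq (z 0) with h0 | h0 <;>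
    rcases Int.emod_two_eq (z 1) with h1 | h1 <;>
      rcases Int.emod_two_eq (z 3) with h3 | h3
  · -- parities (0, 0, 0), perm pF
    have hs : sig2 (ι16 z) = pF := by
      rw [sig2_eq]; simp [h0, h1, h3]
    have hs2 : sig1 (ι16 (fun j => z (pF j))) = pF := by
      rw [sig1_eq]
      simp only [show (pF : Equiv.Perm (Fin 16)) 0 = 0 from by decide,
        show (pF : Equiv.Perm (Fin 16)) 1 = 1 from by decide,
        show (pF : Equiv.Perm (Fin 16)) 2 = 2 from by decide]
      simp [(show z 0 % 2 = 0 by omega), (show z 1 % 2 = 0 by omega), (show z 2 % 2 = 0 by omega)]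
    refine ⟨pF, ?_, ⟨?_, ?_, ?_, ?_⟩, ?_⟩
    · ext j
      show (ι16 z) (sig2 (ι16 z) j) = _
      rw [hs]; rfl
    · show (z (pF 3) - z (pF 2)) % 2 = 0
      rw [show (pF : Equiv.Perm (Fin 16)) 3 = 3 from by decide, show (pF : Equiv.Perm (Fin 16)) 2 = 2 from by decide]; omega
    · show (z (pF 4) - z (pF 0)) % 2 = 0
      rw [show (pF : Equiv.Perm (Fin 16)) 4 = 4 from by decide, show (pF : Equiv.Perm (Fin 16)) 0 = 0 from by decide]; omega
    · show (z (pF 5) - z (pF 1)) % 2 = 0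
      rw [show (pF : Equiv.Perm (Fin 16)) 5 = 5 from by decide, show (pF : Equiv.Perm (Fin 16)) 1 = 1 from by decide]; omega
    · intro j hj
      show z (pF j) % 2 = 0
      rw [pF_fix j hj]
      exact hp j hj
    · ext j
      show (ι16 (fun j => z (pF j))) (sig1 (ι16 (fun j => z (pF j))) j) = _
      rw [hs2]
      show ((z (pF (pF j)) : ℝ)) = ((z j : ℝ))
      rw [pF_invol j]
  · -- parities (0, 0, 1), perm pB
    have hs : sig2 (ι16 z) = pB := by
      rw [sig2_eq]; simp [h0, h1, h3]
    have hs2 : sig1 (ι16 (fun j => z (pB j))) = pB := by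
      rw [sig1_eq]
      simp only [show (pB : Equiv.Perm (Fin 16)) 0 = 0 from by decide,
        show (pB : Equiv.Perm (Fin 16)) 1 = 3 from by decide,
        show (pB : Equiv.Perm (Fin 16)) 2 = 2 from by decide]
      simp [(show z 0 % 2 = 0 by omega), (show z 3 % 2 = 1 by omega), (show z 2 % 2 = 0 by omega)]
    refine ⟨pB, ?_, ⟨?_, ?_, ?_, ?_⟩, ?_⟩
    · ext j
      show (ι16 z) (sig2 (ι16 z) j) = _
      rw [hs]; rfl
    · show (z (pB 3) - z (pB 2)) % 2 = 0
      rw [show (pB : Equiv.Perm (Fin 16)) 3 = 1 from by decide, show (pB : Equiv.Perm (Fin 16)) 2 = 2 from by decide]; omega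
    · show (z (pB 4) - z (pB 0)) % 2 = 0
      rw [show (pB : Equiv.Perm (Fin 16)) 4 = 5 from by decide, show (pB : Equiv.Perm (Fin 16)) 0 = 0 from by decide]; omega
    · show (z (pB 5) - z (pB 1)) % 2 = 0
      rw [show (pB : Equiv.Perm (Fin 16)) 5 = 4 from by decide, show (pB : Equiv.Perm (Fin 16)) 1 = 3 from by decide]; omega
    · intro j hj
      show z (pB j) % 2 = 0
      rw [pB_fix j hj]
      exact hp j hj
    · ext j
      show (ι16 (fun j => z (pB j))) (sig1 (ι16 (fun j => z (pB j))) j) = _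
      rw [hs2]
      show ((z (pB (pB j)) : ℝ)) = ((z j : ℝ))
      rw [pB_invol j]
  · -- parities (0, 1, 0), perm pE
    have hs : sig2 (ι16 z) = pE := by
      rw [sig2_eq]; simp [h0, h1, h3]
    have hs2 : sig1 (ι16 (fun j => z (pE j))) = pE := by
      rw [sig1_eq]
      simp only [show (pE : Equiv.Perm (Fin 16)) 0 = 1 from by decide,
        show (pE : Equiv.Perm (Fin 16)) 1 = 0 from by decide,
        show (pE : Equiv.Perm (Fin 16)) 2 = 2 from by decide]
      simp [(show z 1 % 2 = 1 by omega), (show z 0 % 2 = 0 by omega), (show z 2 % 2 = 1 by omega)]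
    refine ⟨pE, ?_, ⟨?_, ?_, ?_, ?_⟩, ?_⟩
    · ext j
      show (ι16 z) (sig2 (ι16 z) j) = _
      rw [hs]; rfl
    · show (z (pE 3) - z (pE 2)) % 2 = 0
      rw [show (pE : Equiv.Perm (Fin 16)) 3 = 5 from by decide, show (pE : Equiv.Perm (Fin 16)) 2 = 2 from by decide]; omega
    · show (z (pE 4) - z (pE 0)) % 2 = 0
      rw [show (pE : Equiv.Perm (Fin 16)) 4 = 4 from by decide, show (pE : Equiv.Perm (Fin 16)) 0 = 1 from by decide]; omega
    · show (z (pE 5) - z (pE 1)) % 2 = 0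
      rw [show (pE : Equiv.Perm (Fin 16)) 5 = 3 from by decide, show (pE : Equiv.Perm (Fin 16)) 1 = 0 from by decide]; omega
    · intro j hj
      show z (pE j) % 2 = 0
      rw [pE_fix j hj]
      exact hp j hj
    · ext j
      show (ι16 (fun j => z (pE j))) (sig1 (ι16 (fun j => z (pE j))) j) = _
      rw [hs2]
      show ((z (pE (pE j)) : ℝ)) = ((z j : ℝ))
      rw [pE_invol j]
  · -- parities (0, 1, 1), perm pF
    have hs : sig2 (ι16 z) = pF := by
      rw [sig2_eq]; simp [h0, h1, h3]
    have hs2 : sig1 (ι16 (fun j => z (pF j))) = pF := by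
      rw [sig1_eq]
      simp only [show (pF : Equiv.Perm (Fin 16)) 0 = 0 from by decide,
        show (pF : Equiv.Perm (Fin 16)) 1 = 1 from by decide,
        show (pF : Equiv.Perm (Fin 16)) 2 = 2 from by decide]
      simp [(show z 0 % 2 = 0 by omega), (show z 1 % 2 = 1 by omega), (show z 2 % 2 = 1 by omega)]
    refine ⟨pF, ?_, ⟨?_, ?_, ?_, ?_⟩, ?_⟩
    · ext j
      show (ι16 z) (sig2 (ι16 z) j) = _
      rw [hs]; rfl
    · show (z (pF 3) - z (pF 2)) % 2 = 0
      rw [show (pF : Equiv.Perm (Fin 16)) 3 = 3 from by decide, show (pF : Equiv.Perm (Fin 16)) 2 = 2 from by decide]; omega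
    · show (z (pF 4) - z (pF 0)) % 2 = 0
      rw [show (pF : Equiv.Perm (Fin 16)) 4 = 4 from by decide, show (pF : Equiv.Perm (Fin 16)) 0 = 0 from by decide]; omega
    · show (z (pF 5) - z (pF 1)) % 2 = 0
      rw [show (pF : Equiv.Perm (Fin 16)) 5 = 5 from by decide, show (pF : Equiv.Perm (Fin 16)) 1 = 1 from by decide]; omega
    · intro j hj
      show z (pF j) % 2 = 0
      rw [pF_fix j hj]
      exact hp j hj
    · ext j
      show (ι16 (fun j => z (pF j))) (sig1 (ι16 (fun j => z (pF j))) j) = _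
      rw [hs2]
      show ((z (pF (pF j)) : ℝ)) = ((z j : ℝ))
      rw [pF_invol j]
  · -- parities (1, 0, 0), perm pC
    have hs : sig2 (ι16 z) = pC := by
      rw [sig2_eq]; simp [h0, h1, h3]
    have hs2 : sig1 (ι16 (fun j => z (pC j))) = pC := by
      rw [sig1_eq]
      simp only [show (pC : Equiv.Perm (Fin 16)) 0 = 2 from by decide,
        show (pC : Equiv.Perm (Fin 16)) 1 = 1 from by decide,
        show (pC : Equiv.Perm (Fin 16)) 2 = 0 from by decide]
      simp [(show z 2 % 2 = 0 by omega), (show z 1 % 2 = 0 by omega), (show z 0 % 2 = 1 by omega)]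
    refine ⟨pC, ?_, ⟨?_, ?_, ?_, ?_⟩, ?_⟩
    · ext j
      show (ι16 z) (sig2 (ι16 z) j) = _
      rw [hs]; rfl
    · show (z (pC 3) - z (pC 2)) % 2 = 0
      rw [show (pC : Equiv.Perm (Fin 16)) 3 = 4 from by decide, show (pC : Equiv.Perm (Fin 16)) 2 = 0 from by decide]; omega
    · show (z (pC 4) - z (pC 0)) % 2 = 0
      rw [show (pC : Equiv.Perm (Fin 16)) 4 = 3 from by decide, show (pC : Equiv.Perm (Fin 16)) 0 = 2 from by decide]; omega
    · show (z (pC 5) - z (pC 1)) % 2 = 0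
      rw [show (pC : Equiv.Perm (Fin 16)) 5 = 5 from by decide, show (pC : Equiv.Perm (Fin 16)) 1 = 1 from by decide]; omega
    · intro j hj
      show z (pC j) % 2 = 0
      rw [pC_fix j hj]
      exact hp j hj
    · ext j
      show (ι16 (fun j => z (pC j))) (sig1 (ι16 (fun j => z (pC j))) j) = _
      rw [hs2]
      show ((z (pC (pC j)) : ℝ)) = ((z j : ℝ))
      rw [pC_invol j]
  · -- parities (1, 0, 1), perm pA
    have hs : sig2 (ι16 z) = pA := by
      rw [sig2_eq]; simp [h0, h1, h3]
    have hs2 : sig1 (ι16 (fun j => z (pA j))) = pA := by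
      rw [sig1_eq]
      simp only [show (pA : Equiv.Perm (Fin 16)) 0 = 0 from by decide,
        show (pA : Equiv.Perm (Fin 16)) 1 = 1 from by decide,
        show (pA : Equiv.Perm (Fin 16)) 2 = 2 from by decide]
      simp [(show z 0 % 2 = 1 by omega), (show z 1 % 2 = 0 by omega), (show z 2 % 2 = 0 by omega)]
    refine ⟨pA, ?_, ⟨?_, ?_, ?_, ?_⟩, ?_⟩
    · ext j
      show (ι16 z) (sig2 (ι16 z) j) = _
      rw [hs]; rfl
    · show (z (pA 3) - z (pA 2)) % 2 = 0
      rw [show (pA : Equiv.Perm (Fin 16)) 3 = 4 from by decide, show (pA : Equiv.Perm (Fin 16)) 2 = 2 from by decide]; omega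
    · show (z (pA 4) - z (pA 0)) % 2 = 0
      rw [show (pA : Equiv.Perm (Fin 16)) 4 = 3 from by decide, show (pA : Equiv.Perm (Fin 16)) 0 = 0 from by decide]; omega
    · show (z (pA 5) - z (pA 1)) % 2 = 0
      rw [show (pA : Equiv.Perm (Fin 16)) 5 = 5 from by decide, show (pA : Equiv.Perm (Fin 16)) 1 = 1 from by decide]; omega
    · intro j hj
      show z (pA j) % 2 = 0
      rw [pA_fix j hj]
      exact hp j hj
    · ext j
      show (ι16 (fun j => z (pA j))) (sig1 (ι16 (fun j => z (pA j))) j) = _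
      rw [hs2]
      show ((z (pA (pA j)) : ℝ)) = ((z j : ℝ))
      rw [pA_invol j]
  · -- parities (1, 1, 0), perm pD
    have hs : sig2 (ι16 z) = pD := by
      rw [sig2_eq]; simp [h0, h1, h3]
    have hs2 : sig1 (ι16 (fun j => z (pD j))) = pD := by
      rw [sig1_eq]
      simp only [show (pD : Equiv.Perm (Fin 16)) 0 = 0 from by decide,
        show (pD : Equiv.Perm (Fin 16)) 1 = 1 from by decide,
        show (pD : Equiv.Perm (Fin 16)) 2 = 4 from by decide]
      simp [(show z 0 % 2 = 1 by omega), (show z 1 % 2 = 1 by omega), (show z 4 % 2 = 0 by omega)]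
    refine ⟨pD, ?_, ⟨?_, ?_, ?_, ?_⟩, ?_⟩
    · ext j
      show (ι16 z) (sig2 (ι16 z) j) = _
      rw [hs]; rfl
    · show (z (pD 3) - z (pD 2)) % 2 = 0
      rw [show (pD : Equiv.Perm (Fin 16)) 3 = 3 from by decide, show (pD : Equiv.Perm (Fin 16)) 2 = 4 from by decide]; omega
    · show (z (pD 4) - z (pD 0)) % 2 = 0
      rw [show (pD : Equiv.Perm (Fin 16)) 4 = 2 from by decide, show (pD : Equiv.Perm (Fin 16)) 0 = 0 from by decide]; omega
    · show (z (pD 5) - z (pD 1)) % 2 = 0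
      rw [show (pD : Equiv.Perm (Fin 16)) 5 = 5 from by decide, show (pD : Equiv.Perm (Fin 16)) 1 = 1 from by decide]; omega
    · intro j hj
      show z (pD j) % 2 = 0
      rw [pD_fix j hj]
      exact hp j hj
    · ext j
      show (ι16 (fun j => z (pD j))) (sig1 (ι16 (fun j => z (pD j))) j) = _
      rw [hs2]
      show ((z (pD (pD j)) : ℝ)) = ((z j : ℝ))
      rw [pD_invol j]
  · -- parities (1, 1, 1), perm pF
    have hs : sig2 (ι16 z) = pF := by
      rw [sig2_eq]; simp [h0, h1, h3]
    have hs2 : sig1 (ι16 (fun j => z (pF j))) = pF := by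
      rw [sig1_eq]
      simp only [show (pF : Equiv.Perm (Fin 16)) 0 = 0 from by decide,
        show (pF : Equiv.Perm (Fin 16)) 1 = 1 from by decide,
        show (pF : Equiv.Perm (Fin 16)) 2 = 2 from by decide]
      simp [(show z 0 % 2 = 1 by omega), (show z 1 % 2 = 1 by omega), (show z 2 % 2 = 1 by omega)]
    refine ⟨pF, ?_, ⟨?_, ?_, ?_, ?_⟩, ?_⟩
    · ext j
      show (ι16 z) (sig2 (ι16 z) j) = _
      rw [hs]; rfl
    · show (z (pF 3) - z (pF 2)) % 2 = 0
      rw [show (pF : Equiv.Perm (Fin 16)) 3 = 3 from by decide, show (pF : Equiv.Perm (Fin 16)) 2 = 2 from by decide]; omega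
    · show (z (pF 4) - z (pF 0)) % 2 = 0
      rw [show (pF : Equiv.Perm (Fin 16)) 4 = 4 from by decide, show (pF : Equiv.Perm (Fin 16)) 0 = 0 from by decide]; omega
    · show (z (pF 5) - z (pF 1)) % 2 = 0
      rw [show (pF : Equiv.Perm (Fin 16)) 5 = 5 from by decide, show (pF : Equiv.Perm (Fin 16)) 1 = 1 from by decide]; omega
    · intro j hj
      show z (pF j) % 2 = 0
      rw [pF_fix j hj]
      exact hp j hj
    · ext j
      show (ι16 (fun j => z (pF j))) (sig1 (ι16 (fun j => z (pF j))) j) = _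
      rw [hs2]
      show ((z (pF (pF j)) : ℝ)) = ((z j : ℝ))
      rw [pF_invol j]

lemma sum_smul_eval' (B : Fin 16 → Fin 16 → ℤ) (c : Fin 16 → ℝ) (j : Fin 16) :
    (∑ i, c i • ι16 (B i)) j = ∑ i, c i * (B i j : ℝ) := by
  rw [sum16 (fun i => c i • ι16 (B i)), sum16 (fun i => c i * (B i j : ℝ))]
  simp only [PiLp.add_apply, PiLp.smul_apply, ι16_apply, smul_eq_mul]

lemma span_top1 : ⊤ ≤ Submodule.span ℝ (Set.range bas1) := by
  intro v _
  rw [mem_span_range_iff_exists_fun]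
  refine ⟨fun i => if i = 0 then v 0 else if i = 1 then v 1 else if i = 2 then v 2
    else if i = 3 then (v 3 - v 2) / 2 else if i = 4 then (v 4 - v 0) / 2
    else if i = 5 then (v 5 - v 1) / 2 else v i / 2, ?_⟩
  ext j
  simp only [bas1]
  rw [sum_smul_eval' B1 _ j, sum16 (fun i => _ * ((B1 i j : ℤ) : ℝ))]
  fin_cases j <;> simp (config := { decide := true }) [B1] <;> ring

lemma span_top2 : ⊤ ≤ Submodule.span ℝ (Set.range bas2) := by
  intro v _
  rw [mem_span_range_iff_exists_fun]
  refine ⟨fun i => if i = 0 then v 0 else if i = 1 then v 1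
    else if i = 2 then (v 2 - v 1) / 2 else if i = 3 then v 3 - v 0 - v 1
    else if i = 4 then (v 4 - v 3 + v 0 + v 1) / 2 else if i = 5 then (v 5 - v 1) / 2
    else v i / 2, ?_⟩
  ext j
  simp only [bas2]
  rw [sum_smul_eval' B2 _ j, sum16 (fun i => _ * ((B2 i j : ℤ) : ℝ))]
  fin_cases j <;> simp (config := { decide := true }) [B2] <;> ring

def basis1 : Module.Basis (Fin 16) ℝ E16 :=
  basisOfTopLeSpanOfCardEqFinrank bas1 span_top1 (by simp [finrank_euclideanSpace_fin])

def basis2 : Module.Basis (Fin 16) ℝ E16 :=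
  basisOfTopLeSpanOfCardEqFinrank bas2 span_top2 (by simp [finrank_euclideanSpace_fin])

lemma basis1_coe : ⇑basis1 = bas1 := coe_basisOfTopLeSpanOfCardEqFinrank _ _ _
lemma basis2_coe : ⇑basis2 = bas2 := coe_basisOfTopLeSpanOfCardEqFinrank _ _ _

/-- Norm is invariant under coordinate permutation. -/
lemma norm_perm (v : E16) (p : Equiv.Perm (Fin 16)) (w : E16)
    (hw : ∀ j, w j = v (p j)) : ‖w‖ = ‖v‖ := by
  have hsq : ‖w‖ ^ 2 = ‖v‖ ^ 2 := by
    rw [← real_inner_self_eq_norm_sq, ← real_inner_self_eq_norm_sq,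
      PiLp.inner_apply, PiLp.inner_apply]
    have hterm : ∀ i : Fin 16, (inner ℝ (w i) (w i) : ℝ) =
        (fun i => (inner ℝ (v i) (v i) : ℝ)) (p i) := fun i => by rw [hw i]
    rw [Finset.sum_congr rfl (fun i _ => hterm i)]
    exact Equiv.sum_comp p (fun j => (inner ℝ (v j) (v j) : ℝ))
  have h := congrArg Real.sqrt hsq
  rw [Real.sqrt_sq (norm_nonneg _), Real.sqrt_sq (norm_nonneg _)] at h
  exact h

/-- The inner product of two integer vectors. -/
lemma inner_iota (a b : Fin 16 → ℤ) :
    (inner ℝ (ι16 a) (ι16 b) : ℝ) = ((∑ j, a j * b j : ℤ) : ℝ) := by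
  rw [PiLp.inner_apply]
  simp only [RCLike.inner_apply, conj_trivial, ι16_apply]
  push_cast
  exact Finset.sum_congr rfl (fun i _ => mul_comm _ _)

/-- Norm squared of an integer vector. -/
lemma norm_sq_iota (a : Fin 16 → ℤ) :
    ‖ι16 a‖ ^ 2 = ((∑ j, a j * a j : ℤ) : ℝ) := by
  rw [← real_inner_self_eq_norm_sq, inner_iota]

/-- Shells of integer-coordinate sets are finite. -/
lemma shell_finite (P : (Fin 16 → ℤ) → Prop) (r : ℝ) :
    {v : E16 | (∃ z, P z ∧ v = ι16 z) ∧ ‖v‖ = r}.Finite := by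
  classical
  set N : ℤ := ⌈r⌉
  have : {v : E16 | (∃ z, P z ∧ v = ι16 z) ∧ ‖v‖ = r} ⊆
      ι16 '' ((Fintype.piFinset (fun _ : Fin 16 => Finset.Icc (-N) N) : Finset (Fin 16 → ℤ)) :
        Set (Fin 16 → ℤ)) := by
    rintro v ⟨⟨z, -, rfl⟩, hn⟩
    refine ⟨z, ?_, rfl⟩
    simp only [Finset.coe_sort_coe, Finset.mem_coe, Fintype.mem_piFinset, Finset.mem_Icc]
    intro j
    have hr0 : 0 ≤ r := hn ▸ norm_nonneg _
    have hrN : r ≤ (N : ℝ) := Int.le_ceil r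
    have hsq : ((z j : ℝ)) ^ 2 ≤ r ^ 2 := by
      have heq : r ^ 2 = ((∑ i, z i * z i : ℤ) : ℝ) := by rw [← hn, norm_sq_iota]
      have : ((z j * z j : ℤ) : ℝ) ≤ ((∑ i, z i * z i : ℤ) : ℝ) := by
        have := Finset.single_le_sum (f := fun i => z i * z i)
          (fun i _ => mul_self_nonneg (z i)) (Finset.mem_univ j)
        exact_mod_cast this
      rw [heq]
      push_cast at this ⊢
      nlinarith [this]
    constructor
    · by_contra hlt
      push_neg at hlt
      have : ((z j : ℝ)) < -(N : ℝ) := by exact_mod_cast hlt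
      nlinarith
    · by_contra hlt
      push_neg at hlt
      have : ((N : ℝ)) < (z j : ℝ) := by exact_mod_cast hlt
      nlinarith
  exact Set.Finite.subset (Set.Finite.image _ (Finset.finite_toSet _)) this

/-- All inner products between vectors of the first lattice are even. -/
lemma even_inner_lattice1 (x y : Fin 16 → ℤ) (hx : mem1 x) (hy : mem1 y) :
    (∑ j, x j * y j) % 2 = 0 := by
  obtain ⟨hx3, hx4, hx5, hxp⟩ := hx
  obtain ⟨hy3, hy4, hy5, hyp⟩ := hy
  have e6x := hxp 6 (by decide); have e6y := hyp 6 (by decide)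
  have e7x := hxp 7 (by decide); have e7y := hyp 7 (by decide)
  have e8x := hxp 8 (by decide); have e8y := hyp 8 (by decide)
  have e9x := hxp 9 (by decide); have e9y := hyp 9 (by decide)
  have e10x := hxp 10 (by decide); have e10y := hyp 10 (by decide)
  have e11x := hxp 11 (by decide); have e11y := hyp 11 (by decide)
  have e12x := hxp 12 (by decide); have e12y := hyp 12 (by decide)
  have e13x := hxp 13 (by decide); have e13y := hyp 13 (by decide)
  have e14x := hxp 14 (by decide); have e14y := hyp 14 (by decide)
  have e15x := hxp 15 (by decide); have e15y := hyp 15 (by decide)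
  rw [sum16 (fun j => x j * y j)]
  obtain ⟨a3, ha3⟩ : ∃ a, x 3 = x 2 + 2 * a := ⟨(x 3 - x 2) / 2, by omega⟩
  obtain ⟨a4, ha4⟩ : ∃ a, x 4 = x 0 + 2 * a := ⟨(x 4 - x 0) / 2, by omega⟩
  obtain ⟨a5, ha5⟩ : ∃ a, x 5 = x 1 + 2 * a := ⟨(x 5 - x 1) / 2, by omega⟩
  obtain ⟨b3, hb3⟩ : ∃ a, y 3 = y 2 + 2 * a := ⟨(y 3 - y 2) / 2, by omega⟩
  obtain ⟨b4, hb4⟩ : ∃ a, y 4 = y 0 + 2 * a := ⟨(y 4 - y 0) / 2, by omega⟩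
  obtain ⟨b5, hb5⟩ : ∃ a, y 5 = y 1 + 2 * a := ⟨(y 5 - y 1) / 2, by omega⟩
  obtain ⟨c6, hc6⟩ : ∃ a, x 6 = 2 * a := ⟨x 6 / 2, by omega⟩
  obtain ⟨c7, hc7⟩ : ∃ a, x 7 = 2 * a := ⟨x 7 / 2, by omega⟩
  obtain ⟨c8, hc8⟩ : ∃ a, x 8 = 2 * a := ⟨x 8 / 2, by omega⟩
  obtain ⟨c9, hc9⟩ : ∃ a, x 9 = 2 * a := ⟨x 9 / 2, by omega⟩
  obtain ⟨c10, hc10⟩ : ∃ a, x 10 = 2 * a := ⟨x 10 / 2, by omega⟩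
  obtain ⟨c11, hc11⟩ : ∃ a, x 11 = 2 * a := ⟨x 11 / 2, by omega⟩
  obtain ⟨c12, hc12⟩ : ∃ a, x 12 = 2 * a := ⟨x 12 / 2, by omega⟩
  obtain ⟨c13, hc13⟩ : ∃ a, x 13 = 2 * a := ⟨x 13 / 2, by omega⟩
  obtain ⟨c14, hc14⟩ : ∃ a, x 14 = 2 * a := ⟨x 14 / 2, by omega⟩
  obtain ⟨c15, hc15⟩ : ∃ a, x 15 = 2 * a := ⟨x 15 / 2, by omega⟩
  rw [ha3, ha4, ha5, hb3, hb4, hb5, hc6, hc7, hc8, hc9, hc10, hc11, hc12, hc13, hc14, hc15]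
  have : x 0 * y 0 + x 1 * y 1 + x 2 * y 2 + (x 2 + 2 * a3) * (y 2 + 2 * b3)
      + (x 0 + 2 * a4) * (y 0 + 2 * b4) + (x 1 + 2 * a5) * (y 1 + 2 * b5)
      + 2 * c6 * y 6 + 2 * c7 * y 7 + 2 * c8 * y 8 + 2 * c9 * y 9 + 2 * c10 * y 10
      + 2 * c11 * y 11 + 2 * c12 * y 12 + 2 * c13 * y 13 + 2 * c14 * y 14 + 2 * c15 * y 15
      = 2 * (x 0 * y 0 + x 1 * y 1 + x 2 * y 2
        + (x 2 * b3 + a3 * y 2 + 2 * a3 * b3)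
        + (x 0 * b4 + a4 * y 0 + 2 * a4 * b4)
        + (x 1 * b5 + a5 * y 1 + 2 * a5 * b5)
        + c6 * y 6 + c7 * y 7 + c8 * y 8 + c9 * y 9 + c10 * y 10
        + c11 * y 11 + c12 * y 12 + c13 * y 13 + c14 * y 14 + c15 * y 15) := by ring
  rw [this]
  omega

def zu : Fin 16 → ℤ := fun j => if j = 0 ∨ j = 3 then 1 else 0
def zw : Fin 16 → ℤ := fun j => if j = 3 ∨ j = 4 then 1 else 0

lemma mem2_zu : mem2 zu := by decide
lemma mem2_zw : mem2 zw := by decide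

lemma inner_zu_zw : (∑ j, zu j * zw j) = 1 := by
  rw [sum16 (fun j => zu j * zw j)]
  decide

end MilnorConstruction

/-- **Milnor's isospectral non-isometric flat tori in dimension 16.**
There are two lattices in `ℝ¹⁶` (ℤ-spans of bases of `ℝ¹⁶`) having the same number of
vectors of every length `r ≥ 0` (these counting sets being finite), yet no orthogonal
(linear isometric) transformation of `ℝ¹⁶` carries one lattice onto the other.  Hence
the corresponding flat tori are isospectral but not isometric. -/
theorem milnor_isospectral_tori :
    ∃ b₁ b₂ : Module.Basis (Fin 16) ℝ (EuclideanSpace ℝ (Fin 16)),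
      (∀ r : ℝ, 0 ≤ r →
        {v : EuclideanSpace ℝ (Fin 16) |
            v ∈ Submodule.span ℤ (Set.range b₁) ∧ ‖v‖ = r}.Finite ∧
        {v : EuclideanSpace ℝ (Fin 16) |
            v ∈ Submodule.span ℤ (Set.range b₂) ∧ ‖v‖ = r}.Finite ∧
        {v : EuclideanSpace ℝ (Fin 16) |
            v ∈ Submodule.span ℤ (Set.range b₁) ∧ ‖v‖ = r}.ncard =
          {v : EuclideanSpace ℝ (Fin 16) |
            v ∈ Submodule.span ℤ (Set.range b₂) ∧ ‖v‖ = r}.ncard) ∧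
      ¬ ∃ T : EuclideanSpace ℝ (Fin 16) ≃ₗᵢ[ℝ] EuclideanSpace ℝ (Fin 16),
          T '' (Submodule.span ℤ (Set.range b₁) : Set (EuclideanSpace ℝ (Fin 16))) =
            (Submodule.span ℤ (Set.range b₂) : Set (EuclideanSpace ℝ (Fin 16))) := by
  classical
  refine ⟨basis1, basis2, ?_, ?_⟩
  · intro r hr
    have hset1 : {v : E16 | v ∈ Submodule.span ℤ (Set.range ⇑basis1) ∧ ‖v‖ = r}
        = {v : E16 | (∃ z, mem1 z ∧ v = ι16 z) ∧ ‖v‖ = r} := by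
      ext v
      rw [Set.mem_setOf_eq, Set.mem_setOf_eq, basis1_coe, mem_span1]
    have hset2 : {v : E16 | v ∈ Submodule.span ℤ (Set.range ⇑basis2) ∧ ‖v‖ = r}
        = {v : E16 | (∃ z, mem2 z ∧ v = ι16 z) ∧ ‖v‖ = r} := by
      ext v
      rw [Set.mem_setOf_eq, Set.mem_setOf_eq, basis2_coe, mem_span2]
    refine ⟨?_, ?_, ?_⟩
    · rw [hset1]; exact shell_finite mem1 r
    · rw [hset2]; exact shell_finite mem2 r
    · rw [hset1, hset2]
      have hbij : Set.BijOn Φ {v : E16 | (∃ z, mem1 z ∧ v = ι16 z) ∧ ‖v‖ = r}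
          {v : E16 | (∃ z, mem2 z ∧ v = ι16 z) ∧ ‖v‖ = r} := by
        refine ⟨?_, ?_, ?_⟩
        · rintro v ⟨⟨z, hz, rfl⟩, hn⟩
          obtain ⟨p, hΦ, hm2, hΨ⟩ := key1 z hz
          refine ⟨⟨_, hm2, hΦ⟩, ?_⟩
          have hnp := norm_perm (ι16 z) p (ι16 (fun j => z (p j))) (fun j => rfl)
          rw [hΦ, hnp]
          exact hn
        · rintro v ⟨⟨z, hz, rfl⟩, -⟩ w ⟨⟨z', hz', rfl⟩, -⟩ heq
          obtain ⟨p, hΦ, hm2, hΨ⟩ := key1 z hz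
          obtain ⟨p', hΦ', hm2', hΨ'⟩ := key1 z' hz'
          calc ι16 z = Ψ (Φ (ι16 z)) := by rw [hΦ, hΨ]
            _ = Ψ (Φ (ι16 z')) := by rw [heq]
            _ = ι16 z' := by rw [hΦ', hΨ']
        · rintro w ⟨⟨z, hz, rfl⟩, hn⟩
          obtain ⟨p, hΨ, hm1, hΦ⟩ := key2 z hz
          refine ⟨ι16 (fun j => z (p j)), ⟨⟨_, hm1, rfl⟩, ?_⟩, hΦ⟩
          have hnp := norm_perm (ι16 z) p (ι16 (fun j => z (p j))) (fun j => rfl)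
          rw [hnp]
          exact hn
      calc {v : E16 | (∃ z, mem1 z ∧ v = ι16 z) ∧ ‖v‖ = r}.ncard
          = (Φ '' {v : E16 | (∃ z, mem1 z ∧ v = ι16 z) ∧ ‖v‖ = r}).ncard :=
            (Set.ncard_image_of_injOn hbij.injOn).symm
        _ = _ := by rw [hbij.image_eq]
  · rintro ⟨T, hT⟩
    have hu : ι16 zu ∈ (Submodule.span ℤ (Set.range ⇑basis2) : Set E16) := by
      rw [SetLike.mem_coe, basis2_coe, mem_span2]
      exact ⟨zu, mem2_zu, rfl⟩
    have hw : ι16 zw ∈ (Submodule.span ℤ (Set.range ⇑basis2) : Set E16) := by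
      rw [SetLike.mem_coe, basis2_coe, mem_span2]
      exact ⟨zw, mem2_zw, rfl⟩
    rw [← hT] at hu hw
    obtain ⟨x, hx, hxu⟩ := hu
    obtain ⟨y, hy, hyw⟩ := hw
    have hinner : (inner ℝ x y : ℝ) = inner ℝ (ι16 zu) (ι16 zw) := by
      rw [← hxu, ← hyw, LinearIsometryEquiv.inner_map_map]
    obtain ⟨zx, hzx, rfl⟩ := (mem_span1 x).1 (by rw [← basis1_coe]; exact hx)
    obtain ⟨zy, hzy, rfl⟩ := (mem_span1 y).1 (by rw [← basis1_coe]; exact hy)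
    have heven := even_inner_lattice1 zx zy hzx hzy
    rw [inner_iota, inner_iota, inner_zu_zw] at hinner
    have : (∑ j, zx j * zy j) = 1 := by exact_mod_cast hinner
    omega
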